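/- Let α ∈ ℝ, β < 0, σ > 0, and let G be the Vasicek Green's function. Then for every T > 0, every t < T and every x ∈ ℝ: ∫_ℝ G(t,T;x,ξ)·e^{(ξ−x)/β} dξ = exp((σ²/(2β²) + α/β)·(T − t)). -/

import Mathlib

/-- Squared width `Σ(t,s)²` of the Vasicek Green's function. -/
noncomputable def vasicekSigmaSq (β σ t s : ℝ) : ℝ :=
  -(σ ^ 2 / (2 * β)) * (1 - Real.exp (2 * β * (s - t)))

/-- Mean `μ(t,s;x)` of the Vasicek Green's function. -/
noncomputable def vasicekMu (α β σ t s x : ℝ) : ℝ :=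
  x * Real.exp (β * (s - t)) - (α / β) * (1 - Real.exp (β * (s - t))) +
    (σ ^ 2 / (2 * β ^ 2)) *
      (Real.exp (-(β * (s - t))) + Real.exp (β * (s - t)) - 2)

/-- Factor `C₁(t,s;ξ)` of the Vasicek Green's function. -/
noncomputable def vasicekC1 (α β σ t s ξ : ℝ) : ℝ :=
  Real.exp (-((σ ^ 2 * Real.exp (-(2 * β * (s - t)))
      - 4 * ξ * β ^ 2 * Real.exp (-(β * (s - t)))
      - 4 * σ ^ 2 * Real.exp (-(β * (s - t)))
      - 4 * α * β * Real.exp (-(β * (s - t)))) / (4 * β ^ 3)))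

/-- Factor `C₂(t,s;ξ)` of the Vasicek Green's function. -/
noncomputable def vasicekC2 (α β σ t s ξ : ℝ) : ℝ :=
  Real.exp ((σ ^ 2 / (2 * β ^ 2) + α / β) * (s - t)
    - 3 * σ ^ 2 / (4 * β ^ 3) - ξ / β - α / β ^ 2)

/-- The Vasicek Green's function
`G(t,s;x,ξ) = C₁C₂/(√(2π)Σ) · exp(−(ξ−μ)²/(2Σ²))`. -/
noncomputable def vasicekG (α β σ t s x ξ : ℝ) : ℝ :=
  vasicekC1 α β σ t s ξ * vasicekC2 α β σ t s ξ /
    (Real.sqrt (2 * Real.pi) * Real.sqrt (vasicekSigmaSq β σ t s)) *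
    Real.exp (-((ξ - vasicekMu α β σ t s x) ^ 2 / (2 * vasicekSigmaSq β σ t s)))

/-- Tilted Gaussian integral:
`∫ exp(cξ − (ξ−m)²/(2v)) dξ = √(2πv)·exp(cm + c²v/2)`. -/
lemma gauss_tilt (v c m : ℝ) (hv : 0 < v) :
    (∫ ξ : ℝ, Real.exp (c * ξ - (ξ - m) ^ 2 / (2 * v)))
      = Real.sqrt (2 * Real.pi * v) * Real.exp (c * m + c ^ 2 * v / 2) := by
  have hv' : v ≠ 0 := ne_of_gt hv
  have h1 : ∀ ξ : ℝ, c * ξ - (ξ - m) ^ 2 / (2 * v)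
      = (c * m + c ^ 2 * v / 2) + (-(1 / (2 * v)) * (ξ - (m + c * v)) ^ 2) := by
    intro ξ; field_simp; ring
  have h2 : (∫ ξ : ℝ, Real.exp (c * ξ - (ξ - m) ^ 2 / (2 * v)))
      = Real.exp (c * m + c ^ 2 * v / 2)
        * ∫ ξ : ℝ, Real.exp (-(1 / (2 * v)) * (ξ - (m + c * v)) ^ 2) := by
    simp only [h1, Real.exp_add]
    exact MeasureTheory.integral_const_mul _ _
  rw [h2,
    MeasureTheory.integral_sub_right_eq_self
      (fun ξ : ℝ => Real.exp (-(1 / (2 * v)) * ξ ^ 2)) (m + c * v),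
    integral_gaussian]
  rw [show Real.pi / (1 / (2 * v)) = 2 * Real.pi * v by field_simp]
  ring

/-- Tilted total mass of the Vasicek Green's function:
`∫ G(t,T;x,ξ)·e^{(ξ−x)/β} dξ = exp((σ²/(2β²) + α/β)(T − t))`. -/
theorem vasicek_green_tilted_mass
    (α β σ : ℝ) (hβ : β < 0) (hσ : 0 < σ) :
    ∀ T : ℝ, 0 < T → ∀ t : ℝ, t < T → ∀ x : ℝ,
      (∫ ξ : ℝ, vasicekG α β σ t T x ξ * Real.exp ((ξ - x) / β)) =
        Real.exp ((σ ^ 2 / (2 * β ^ 2) + α / β) * (T - t)) := by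
  intro T hT t htT x
  have hβ0 : β ≠ 0 := ne_of_lt hβ
  have hτ : 0 < T - t := by linarith
  have hE : 0 < Real.exp (β * (T - t)) := Real.exp_pos _
  set v := vasicekSigmaSq β σ t T with hvdef
  set μ := vasicekMu α β σ t T x with hμdef
  have hv : 0 < v := by
    rw [hvdef, vasicekSigmaSq]
    have h1 : Real.exp (2 * β * (T - t)) < 1 := by
      rw [Real.exp_lt_one_iff]; nlinarith
    have h2 : σ ^ 2 / (2 * β) < 0 :=
      div_neg_of_pos_of_neg (by positivity) (by linarith)
    nlinarith
  set c : ℝ := Real.exp (-(β * (T - t))) / β with hcdef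
  set A : ℝ := -((σ ^ 2 * Real.exp (-(2 * β * (T - t)))
      - 4 * σ ^ 2 * Real.exp (-(β * (T - t)))
      - 4 * α * β * Real.exp (-(β * (T - t)))) / (4 * β ^ 3))
    + ((σ ^ 2 / (2 * β ^ 2) + α / β) * (T - t)
      - 3 * σ ^ 2 / (4 * β ^ 3) - α / β ^ 2) - x / β with hAdef
  set S : ℝ := Real.sqrt (2 * Real.pi) * Real.sqrt v with hSdef
  have hS : S = Real.sqrt (2 * Real.pi * v) := by
    rw [hSdef, ← Real.sqrt_mul (by positivity) v]
  have hSpos : 0 < S := by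
    rw [hS]; exact Real.sqrt_pos.2 (by positivity)
  have base : ∀ a b g d A' r : ℝ, a + b + g + d = A' + r →
      Real.exp a * Real.exp b / S * Real.exp g * Real.exp d
        = Real.exp A' / S * Real.exp r := by
    intro a b g d A' r h
    rw [div_mul_eq_mul_div, div_mul_eq_mul_div, div_mul_eq_mul_div,
      ← Real.exp_add, ← Real.exp_add, ← Real.exp_add, h, Real.exp_add]
  have key : ∀ ξ : ℝ, vasicekG α β σ t T x ξ * Real.exp ((ξ - x) / β)
      = Real.exp A / S * Real.exp (c * ξ - (ξ - μ) ^ 2 / (2 * v)) := by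
    intro ξ
    rw [vasicekG, vasicekC1, vasicekC2]
    exact base _ _ _ _ _ _ (by
      rw [hAdef, hcdef, ← hvdef, ← hμdef]; field_simp; ring)
  calc (∫ ξ : ℝ, vasicekG α β σ t T x ξ * Real.exp ((ξ - x) / β))
      = ∫ ξ : ℝ, Real.exp A / S * Real.exp (c * ξ - (ξ - μ) ^ 2 / (2 * v)) := by
        simp only [key]
    _ = Real.exp A / S * ∫ ξ : ℝ, Real.exp (c * ξ - (ξ - μ) ^ 2 / (2 * v)) :=
        MeasureTheory.integral_const_mul _ _
    _ = Real.exp A / S * (Real.sqrt (2 * Real.pi * v)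
          * Real.exp (c * μ + c ^ 2 * v / 2)) := by rw [gauss_tilt v c μ hv]
    _ = Real.exp A * Real.exp (c * μ + c ^ 2 * v / 2) := by
        rw [← hS]; field_simp
    _ = Real.exp (A + (c * μ + c ^ 2 * v / 2)) := (Real.exp_add _ _).symm
    _ = Real.exp ((σ ^ 2 / (2 * β ^ 2) + α / β) * (T - t)) := by
        congr 1
        rw [hAdef, hcdef, hμdef, hvdef, vasicekMu, vasicekSigmaSq]
        have e1 : Real.exp (-(β * (T - t))) = (Real.exp (β * (T - t)))⁻¹ :=
          Real.exp_neg _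
        have e2 : Real.exp (2 * β * (T - t))
            = Real.exp (β * (T - t)) * Real.exp (β * (T - t)) := by
          rw [← Real.exp_add]; ring_nf
        have e3 : Real.exp (-(2 * β * (T - t)))
            = (Real.exp (β * (T - t)) * Real.exp (β * (T - t)))⁻¹ := by
          rw [Real.exp_neg, e2]
        rw [e1, e2, e3]
        field_simp
        ring
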